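/- For Re(s) > 1, the double series ∑_{k=1}^∞ ∑_{p prime} ∑_{m=1}^∞ |μ(k)| p^(-mk·Re(s)) / (km) converges, justifying the rearrangement in the Möbius inversion formula for the prime zeta function. -/

import Mathlib

/-!
Drop `|μ(k)| ≤ 1` and `km ≥ 1`, and write `x = p^{-σ} ≤ 1/2`. Since `mk - 1 ≥ (k - 1) + (m - 1)`,
`x^{mk} ≤ x · 2^{1-k} · 2^{1-m}`, so the series is dominated by the product of the prime series
`∑_p p^{-σ}`, convergent for `σ > 1`, with two geometric series.
-/

open ArithmeticFunction

lemma pow_mul_le_of_le_half {x : ℝ} (hx₀ : 0 ≤ x) (hx : x ≤ 1 / 2) {k m : ℕ} (hk : 0 < k)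
    (hm : 0 < m) : x ^ (m * k) ≤ 4 * ((1 / 2) ^ k * (x * (1 / 2) ^ m)) := by
  obtain ⟨k, rfl⟩ := Nat.exists_eq_add_of_lt hk
  obtain ⟨m, rfl⟩ := Nat.exists_eq_add_of_lt hm
  calc x ^ ((0 + m + 1) * (0 + k + 1))
      ≤ x ^ (k + m + 1) :=
        pow_le_pow_of_le_one hx₀ (by linarith) (by nlinarith)
    _ = x ^ k * (x * x ^ m) := by ring
    _ ≤ (1 / 2) ^ k * (x * (1 / 2) ^ m) := by gcongr
    _ = 4 * ((1 / 2) ^ (0 + k + 1) * (x * (1 / 2) ^ (0 + m + 1))) := by ring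

lemma rpow_neg_le_half {p σ : ℝ} (hp : 2 ≤ p) (hσ : 1 ≤ σ) : p ^ (-σ) ≤ 1 / 2 :=
  calc p ^ (-σ) ≤ p ^ (-1 : ℝ) := Real.rpow_le_rpow_of_exponent_le (by linarith) (by linarith)
    _ = p⁻¹ := Real.rpow_neg_one p
    _ ≤ 1 / 2 := by rw [one_div]; exact inv_anti₀ two_pos hp

lemma summable_pnat_half_pow : Summable (fun k : ℕ+ => (1 / 2 : ℝ) ^ (k : ℕ)) :=
  summable_geometric_two.comp_injective PNat.coe_injective

/-- **Absolute convergence of the triple series in the Möbius inversion for the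
prime zeta function.** For `Re(s) > 1`, the series
`∑_k ∑_p ∑_m |μ(k)| p^{-mk Re(s)} / (km)` converges. -/
theorem moebius_inversion_triple_series_summable (s : ℂ) (hs : 1 < s.re) :
    Summable (fun x : ℕ+ × Nat.Primes × ℕ+ =>
      (|(moebius (x.1 : ℕ) : ℤ)| : ℝ)
        * (x.2.1 : ℝ) ^ (-((x.2.2 : ℝ) * (x.1 : ℝ) * s.re))
        / ((x.1 : ℝ) * (x.2.2 : ℝ))) := by
  have hprimes : Summable (fun p : Nat.Primes => (p : ℝ) ^ (-s.re)) :=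
    Nat.Primes.summable_rpow.mpr (by linarith)
  have hmajorant := (summable_pnat_half_pow.mul_of_nonneg
    (hprimes.mul_of_nonneg summable_pnat_half_pow (fun _ ↦ by positivity) (fun _ ↦ by positivity))
    (fun _ ↦ by positivity) (fun _ ↦ by positivity)).mul_left 4
  refine hmajorant.of_nonneg_of_le (fun _ ↦ by positivity) fun ⟨k, p, m⟩ ↦ ?_
  have hp : (0 : ℝ) ≤ p := by positivity
  have hkm : (1 : ℝ) ≤ k * m := by exact_mod_cast (one_le : 1 ≤ k * m)
  have hμ : (|(moebius (k : ℕ) : ℤ)| : ℝ) ≤ 1 := by exact_mod_cast abs_moebius_le_one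
  have hpow : (p : ℝ) ^ (-((m : ℝ) * k * s.re)) = ((p : ℝ) ^ (-s.re)) ^ ((m : ℕ) * (k : ℕ)) := by
    rw [← Real.rpow_natCast, ← Real.rpow_mul hp]; push_cast; ring_nf
  calc (|(moebius (k : ℕ) : ℤ)| : ℝ) * (p : ℝ) ^ (-((m : ℝ) * k * s.re)) / (k * m)
      ≤ (p : ℝ) ^ (-((m : ℝ) * k * s.re)) :=
        div_le_of_le_mul₀ (by positivity) (by positivity)
          (by nlinarith [show (0 : ℝ) ≤ _ from Real.rpow_nonneg hp (-((m : ℝ) * k * s.re))])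
    _ ≤ _ := hpow ▸ pow_mul_le_of_le_half (by positivity)
        (rpow_neg_le_half (by exact_mod_cast p.2.two_le) hs.le) k.pos m.pos
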